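/- For every k with k ≥ l'(x) − 1, the promoted set at level k+1 is exactly T_{k+1} = {i ∈ L_{k+1} : there exists j ∈ T_k with j << i}. -/

import Mathlib

/-- `c` is an increasing subsequence of `(S, f)`: a list of indices, all in `S`,
strictly increasing in index and strictly increasing in value. -/
def IsIncrSubseq (S : Finset ℕ) (f : ℕ → ℝ) (c : List ℕ) : Prop :=
  (∀ a ∈ c, a ∈ S) ∧ c.Chain' (· < ·) ∧ c.Chain' (fun a b => f a < f b)

/-- `lvl S f i` is the maximum length of an increasing subsequence of `(S, f)` ending at `i`. -/
noncomputable def lvl (S : Finset ℕ) (f : ℕ → ℝ) (i : ℕ) : ℕ :=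
  sSup {m | ∃ c : List ℕ, IsIncrSubseq S f c ∧ c.getLast? = some i ∧ c.length = m}

/-- The level set `L_k = {i ∈ S : lvl S f i = k}`. -/
def levelSet (S : Finset ℕ) (f : ℕ → ℝ) (k : ℕ) : Set ℕ :=
  {i | i ∈ S ∧ lvl S f i = k}

/-- The promoted set `T_k`: indices of `S' = S ∪ {x}` whose post-insertion level is `k + 1`
and which are either the inserted index `x` or had pre-insertion level `k`. -/
def promoted (S : Finset ℕ) (f : ℕ → ℝ) (x : ℕ) (k : ℕ) : Set ℕ :=
  {i | i ∈ insert x S ∧ lvl (insert x S) f i = k + 1 ∧ (i = x ∨ lvl S f i = k)}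

/-!
Deleting `x` from an increasing subsequence of `S'` shortens it by at most one, so `l' ≤ l + 1`
on `S`; and the penultimate entry `j` of a longest subsequence ending at `i` satisfies `j << i`
and `l(j) = l(i) - 1`. For `i ∈ T_{k+1}` the bound on `k` forces `i ≠ x`, and that penultimate
entry, taken in `S'`, lies in `T_k`: it is `x`, or `l(j) ≤ l(i) - 1 = k` while
`k + 1 = l'(j) ≤ l(j) + 1`. Conversely a `j ∈ T_k` below `i ∈ L_{k+1}` forces
`k + 2 ≤ l'(i) ≤ l(i) + 1 = k + 2`.
-/

namespace IsIncrSubseq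

variable {S T : Finset ℕ} {f : ℕ → ℝ} {c d : List ℕ} {i : ℕ}

theorem nodup (hc : IsIncrSubseq S f c) : c.Nodup :=
  (List.isChain_iff_pairwise.mp hc.2.1).imp Nat.ne_of_lt

theorem length_le_card (hc : IsIncrSubseq S f c) : c.length ≤ S.card := by
  classical
  rw [← List.toFinset_card_of_nodup hc.nodup]
  exact Finset.card_le_card fun a ha => hc.1 a (List.mem_toFinset.mp ha)

theorem of_sublist (hc : IsIncrSubseq S f c) (hdc : d.Sublist c) (hdT : ∀ a ∈ d, a ∈ T) :
    IsIncrSubseq T f d :=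
  haveI : Trans (fun a b => f a < f b) (fun a b => f a < f b) (fun a b => f a < f b) :=
    ⟨lt_trans⟩
  ⟨hdT, hc.2.1.sublist hdc, hc.2.2.sublist hdc⟩

theorem append_singleton_iff :
    IsIncrSubseq S f (c ++ [i]) ↔
      IsIncrSubseq S f c ∧ i ∈ S ∧ ∀ j ∈ c.getLast?, j < i ∧ f j < f i := by
  simp only [IsIncrSubseq, List.Chain', List.isChain_append, List.mem_append,
    List.mem_singleton, List.isChain_singleton, List.head?_cons, Option.mem_def,
    Option.some.injEq]
  grind

end IsIncrSubseq

section Level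

variable {S T : Finset ℕ} {f : ℕ → ℝ} {c : List ℕ} {i j : ℕ}

theorem bddAbove_lvl_lengths (S : Finset ℕ) (f : ℕ → ℝ) (i : ℕ) :
    BddAbove {m | ∃ c : List ℕ, IsIncrSubseq S f c ∧ c.getLast? = some i ∧ c.length = m} :=
  ⟨S.card, fun _ ⟨_, hc, _, hm⟩ => hm ▸ hc.length_le_card⟩

theorem IsIncrSubseq.length_lt_lvl (hc : IsIncrSubseq S f (c ++ [i])) :
    c.length < lvl S f i := by
  have := le_csSup (bddAbove_lvl_lengths S f i) ⟨c ++ [i], hc, List.getLast?_concat, rfl⟩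
  simpa [lvl] using this

theorem exists_isIncrSubseq_length_add_one_eq_lvl (hi : i ∈ S) :
    ∃ c, IsIncrSubseq S f (c ++ [i]) ∧ c.length + 1 = lvl S f i := by
  have hne : {m | ∃ c : List ℕ, IsIncrSubseq S f c ∧ c.getLast? = some i ∧ c.length = m}.Nonempty :=
    ⟨1, [i], ⟨by simpa using hi, List.isChain_singleton i, List.isChain_singleton i⟩, rfl, rfl⟩
  obtain ⟨c, hc, hlast, hlen⟩ := Nat.sSup_mem hne (bddAbove_lvl_lengths S f i)
  obtain ⟨c, rfl⟩ := List.getLast?_eq_some_iff.mp hlast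
  exact ⟨c, hc, by simpa [lvl] using hlen⟩

theorem lvl_mono (hST : S ⊆ T) (hi : i ∈ S) : lvl S f i ≤ lvl T f i := by
  obtain ⟨c, hc, hlen⟩ := exists_isIncrSubseq_length_add_one_eq_lvl (f := f) hi
  have := (hc.of_sublist (List.Sublist.refl _) fun a ha => hST (hc.1 a ha)).length_lt_lvl
  omega

theorem lvl_add_one_le_of_lt (hj : j ∈ S) (hi : i ∈ S) (hji : j < i) (hf : f j < f i) :
    lvl S f j + 1 ≤ lvl S f i := by
  obtain ⟨c, hc, hlen⟩ := exists_isIncrSubseq_length_add_one_eq_lvl (f := f) hj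
  have hci : IsIncrSubseq S f (c ++ [j] ++ [i]) :=
    IsIncrSubseq.append_singleton_iff.mpr ⟨hc, hi, by simp [hji, hf]⟩
  have := hci.length_lt_lvl
  simp only [List.length_append, List.length_singleton] at this
  omega

theorem exists_lt_lvl_add_one_eq (hi : i ∈ S) (h2 : 2 ≤ lvl S f i) :
    ∃ j ∈ S, j < i ∧ f j < f i ∧ lvl S f j + 1 = lvl S f i := by
  obtain ⟨c, hc, hlen⟩ := exists_isIncrSubseq_length_add_one_eq_lvl (f := f) hi
  obtain rfl | ⟨c, j, rfl⟩ := c.eq_nil_or_concat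
  · simp only [List.length_nil] at hlen; omega
  rw [List.concat_eq_append] at hc hlen
  obtain ⟨hcj, -, hji⟩ := IsIncrSubseq.append_singleton_iff.mp hc
  obtain ⟨hji, hf⟩ := hji j List.getLast?_concat
  have hj := (IsIncrSubseq.append_singleton_iff.mp hcj).2.1
  have hle := hcj.length_lt_lvl
  have hge := lvl_add_one_le_of_lt hj hi hji hf
  simp only [List.length_append, List.length_singleton] at hlen
  exact ⟨j, hj, hji, hf, by omega⟩

theorem lvl_insert_le {x : ℕ} (hx : x ∉ S) (hi : i ∈ S) :
    lvl (insert x S) f i ≤ lvl S f i + 1 := by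
  obtain ⟨c, hc, hlen⟩ := exists_isIncrSubseq_length_add_one_eq_lvl (f := f)
    (Finset.mem_insert_of_mem (b := x) hi)
  have hxi : x ≠ i := fun h => hx (h ▸ hi)
  have hnd : c.Nodup := hc.nodup.sublist (List.sublist_append_left c [i])
  have hsub : (c.erase x ++ [i]).Sublist (c ++ [i]) := List.erase_sublist.append_right _
  have hS : ∀ a ∈ c.erase x ++ [i], a ∈ S := by
    intro a ha
    have hax : a ≠ x := by
      rcases List.mem_append.mp ha with ha | ha
      · exact ((hnd.mem_erase_iff).mp ha).1
      · exact (List.mem_singleton.mp ha) ▸ hxi.symm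
    exact (Finset.mem_insert.mp (hc.1 a (hsub.mem ha))).resolve_left hax
  have := (hc.of_sublist hsub hS).length_lt_lvl
  have := List.length_erase (a := x) (l := c)
  split_ifs at this <;> omega

end Level

section Promoted

variable {S : Finset ℕ} {f : ℕ → ℝ} {x k i j : ℕ}

theorem mem_promoted_succ_of_lt (hx : x ∉ S) (hi : i ∈ levelSet S f (k + 1))
    (hj : j ∈ promoted S f x k) (hji : j < i) (hf : f j < f i) :
    i ∈ promoted S f x (k + 1) := by
  obtain ⟨hiS, hli⟩ := hi
  obtain ⟨hjS', hl'j, -⟩ := hj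
  have hiS' : i ∈ insert x S := Finset.mem_insert_of_mem hiS
  have hlow := lvl_add_one_le_of_lt hjS' hiS' hji hf
  have hhigh := lvl_insert_le (f := f) hx hiS
  exact ⟨hiS', by omega, Or.inr hli⟩

theorem exists_promoted_lt_of_mem_promoted_succ (hx : x ∉ S)
    (hk : lvl (insert x S) f x ≤ k + 1) (hi : i ∈ promoted S f x (k + 1)) :
    i ∈ levelSet S f (k + 1) ∧ ∃ j ∈ promoted S f x k, j < i ∧ f j < f i := by
  obtain ⟨hiS', hl'i, hix | hli⟩ := hi
  · subst hix; omega
  have hiS : i ∈ S := (Finset.mem_insert.mp hiS').resolve_left fun h => by subst h; omega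
  obtain ⟨j, hjS', hji, hf, hl'j⟩ := exists_lt_lvl_add_one_eq (f := f) hiS' (by omega)
  refine ⟨⟨hiS, hli⟩, j, ⟨hjS', by omega, ?_⟩, hji, hf⟩
  by_cases hjx : j = x
  · exact Or.inl hjx
  have hjS : j ∈ S := (Finset.mem_insert.mp hjS').resolve_left hjx
  have hup := lvl_add_one_le_of_lt hjS hiS hji hf
  have hins := lvl_insert_le (f := f) hx hjS
  have hmono := lvl_mono (f := f) (Finset.subset_insert x S) hjS
  exact Or.inr (by omega)

end Promoted

/-- For every `k ≥ l'(x) - 1`, the promoted set at level `k + 1` is exactly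
`T_{k+1} = {i ∈ L_{k+1} : ∃ j ∈ T_k, j << i}`. -/
theorem stmt_4 (S : Finset ℕ) (f : ℕ → ℝ) (x : ℕ) (hx : x ∉ S) (k : ℕ)
    (hk : lvl (insert x S) f x - 1 ≤ k) :
    promoted S f x (k + 1) =
      {i | i ∈ levelSet S f (k + 1) ∧ ∃ j ∈ promoted S f x k, j < i ∧ f j < f i} := by
  ext i
  exact ⟨exists_promoted_lt_of_mem_promoted_succ hx (by omega),
    fun ⟨hi, _, hj, hji, hf⟩ => mem_promoted_succ_of_lt hx hi hj hji hf⟩
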